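/- arXiv:2107.03221 — 3 statements merged into one kernel-verified Lean document; each statement's English description precedes it below -/
import Mathlib

section
/- Let ξ:{3α+2β}→ℂ∖{0} be a map. A linear form λ∈𝔫* belongs to the coadjoint orbit Ω_{{3α+2β},ξ} if and only if λ_{3α+2β}=ξ(3α+2β) and 2c₅λ_αλ_{3α+2β} − 2c₃λ_{α+β}λ_{3α+β} + c₂λ_{2α+β}² = 0 (with λ_β, λ_{α+β}, λ_{2α+β}, λ_{3α+β} arbitrary). -/
/-!
Write `x = ∑ tᵢ eᵢ`. The root-sum condition fixes the whole bracket table, so `A = -ad x` is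
an explicit endomorphism raising the height of roots, with `A⁵ = 0`, and `f ∘ exp A` can be
evaluated on the basis: its coordinates are the polynomials `g2OrbitCoords` in `t`. The Jacobi
identity for `e_α, e_β, e_{2α+β}` gives `c₁c₅ = c₃c₄`, under which the quadratic invariant
vanishes on these polynomials. Conversely, with `t₀ = t₅ = 0` the coordinates `λ₁, …, λ₄` are
invertible linear functions of `t₁, …, t₄`, and the invariant then forces the value of `λ₀`.
-/

open scoped RealInnerProductSpace

/-- The exponential of a (nilpotent) endomorphism, as a finite sum. -/
noncomputable def expNil {M : Type*} [AddCommGroup M] [Module ℂ M] (A : Module.End ℂ M) :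
    Module.End ℂ M :=
  ∑ k ∈ Finset.range (nilpotencyClass A), (k.factorial : ℂ)⁻¹ • A ^ k

/-- The coadjoint orbit `Ω_{D,ξ}` of the linear form `f_{D,ξ} = ∑_{γ∈D} ξ(γ) e_γ*`,
consisting of all `f_{D,ξ} ∘ exp(−ad x)`, `x ∈ 𝔫`.  Roots are encoded by indices. -/
noncomputable def coadjointOrbit {ι : Type*} {n : Type*} [LieRing n] [LieAlgebra ℂ n]
    (e : Module.Basis ι ℂ n) (D : Finset ι) (ξ : ι → ℂ) :
    Set (Module.Dual ℂ n) :=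
  {lam | ∃ x : n, lam = (∑ i ∈ D, ξ i • e.coord i).comp (expNil (-(LieAlgebra.ad ℂ n x)))}

/-- The basic subvariety `𝒪_{D,ξ} = Σ_{γ∈D} Ω_{{γ},ξ|{γ}}`. -/
noncomputable def basicSubvariety {ι : Type*} [DecidableEq ι] {n : Type*} [LieRing n] [LieAlgebra ℂ n]
    (e : Module.Basis ι ℂ n) (D : Finset ι) (ξ : ι → ℂ) :
    Set (Module.Dual ℂ n) :=
  {lam | ∃ μ : ι → Module.Dual ℂ n,
    (∀ i ∈ D, μ i ∈ coadjointOrbit e {i} ξ) ∧ lam = ∑ i ∈ D, μ i}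

lemma expNil_eq_sum_range_of_pow_eq_zero {M : Type*} [AddCommGroup M] [Module ℂ M]
    {A : Module.End ℂ M} {m : ℕ} (h : A ^ m = 0) :
    expNil A = ∑ k ∈ Finset.range m, (k.factorial : ℂ)⁻¹ • A ^ k := by
  refine Finset.sum_subset (Finset.range_subset_range.mpr (Nat.sInf_le h)) fun k _ hk ↦ ?_
  rw [pow_eq_zero_of_le (by simpa using hk) (pow_nilpotencyClass ⟨m, h⟩), smul_zero]

section RootGeometry

def g2PositiveRoots (α β : EuclideanSpace ℝ (Fin 2)) : Fin 6 → EuclideanSpace ℝ (Fin 2) :=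
  ![α, β, α + β, (2:ℝ) • α + β, (3:ℝ) • α + β, (3:ℝ) • α + (2:ℝ) • β]

def g2Coeff : Fin 6 → ℝ × ℝ := ![(1, 0), (0, 1), (1, 1), (2, 1), (3, 1), (3, 2)]

def g2Quad (p : ℝ × ℝ) : ℝ := p.1 ^ 2 - 3 * p.1 * p.2 + 3 * p.2 ^ 2

variable {α β : EuclideanSpace ℝ (Fin 2)}

lemma g2PositiveRoots_apply (k : Fin 6) :
    g2PositiveRoots α β k = (g2Coeff k).1 • α + (g2Coeff k).2 • β := by
  fin_cases k <;> simp [g2PositiveRoots, g2Coeff]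

lemma inner_smul_add_smul_self (hαα : ⟪α, α⟫ = 1) (hββ : ⟪β, β⟫ = 3) (hαβ : ⟪α, β⟫ = -(3/2))
    (p : ℝ × ℝ) : ⟪p.1 • α + p.2 • β, p.1 • α + p.2 • β⟫ = g2Quad p := by
  simp only [inner_add_left, inner_add_right, real_inner_smul_left, real_inner_smul_right,
    hαα, hββ, hαβ, real_inner_comm α β, g2Quad]
  ring

lemma smul_add_smul_notMem_range_g2PositiveRoots (hαα : ⟪α, α⟫ = 1) (hββ : ⟪β, β⟫ = 3)
    (hαβ : ⟪α, β⟫ = -(3/2)) {p : ℝ × ℝ} (hp : g2Quad p ∉ ({1, 3} : Set ℝ)) :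
    p.1 • α + p.2 • β ∉ Set.range (g2PositiveRoots α β) := by
  rintro ⟨k, hk⟩
  rw [g2PositiveRoots_apply] at hk
  have hq : g2Quad (g2Coeff k) = g2Quad p := by
    rw [← inner_smul_add_smul_self hαα hββ hαβ, ← inner_smul_add_smul_self hαα hββ hαβ, hk]
  refine hp (hq ▸ ?_)
  fin_cases k <;> norm_num [g2Quad, g2Coeff]

end RootGeometry

section BracketTable

variable {n : Type*} [LieRing n] [LieAlgebra ℂ n]

structure G2BracketTable (e : Module.Basis (Fin 6) ℂ n) (c₁ c₂ c₃ c₄ c₅ : ℂ) : Prop where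
  lie_zero_one : ⁅e 0, e 1⁆ = c₁ • e 2
  lie_zero_two : ⁅e 0, e 2⁆ = c₂ • e 3
  lie_zero_three : ⁅e 0, e 3⁆ = c₃ • e 4
  lie_zero_four : ⁅e 0, e 4⁆ = 0
  lie_zero_five : ⁅e 0, e 5⁆ = 0
  lie_one_two : ⁅e 1, e 2⁆ = 0
  lie_one_three : ⁅e 1, e 3⁆ = 0
  lie_four_one : ⁅e 4, e 1⁆ = c₄ • e 5
  lie_one_five : ⁅e 1, e 5⁆ = 0
  lie_two_three : ⁅e 2, e 3⁆ = c₅ • e 5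
  lie_two_four : ⁅e 2, e 4⁆ = 0
  lie_two_five : ⁅e 2, e 5⁆ = 0
  lie_three_four : ⁅e 3, e 4⁆ = 0
  lie_three_five : ⁅e 3, e 5⁆ = 0
  lie_four_five : ⁅e 4, e 5⁆ = 0

variable {e : Module.Basis (Fin 6) ℂ n} {c₁ c₂ c₃ c₄ c₅ : ℂ}

lemma lie_eq_zero_of_g2Quad_notMem {α β : EuclideanSpace ℝ (Fin 2)}
    (hαα : ⟪α, α⟫ = 1) (hββ : ⟪β, β⟫ = 3) (hαβ : ⟪α, β⟫ = -(3/2))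
    (h0 : ∀ i j : Fin 6, g2PositiveRoots α β i + g2PositiveRoots α β j ∉
      Set.range (g2PositiveRoots α β) → ⁅e i, e j⁆ = 0)
    (i j : Fin 6) (hij : g2Quad (g2Coeff i + g2Coeff j) ∉ ({1, 3} : Set ℝ)) :
    ⁅e i, e j⁆ = 0 := by
  refine h0 i j ?_
  have hsum : g2PositiveRoots α β i + g2PositiveRoots α β j =
      (g2Coeff i + g2Coeff j).1 • α + (g2Coeff i + g2Coeff j).2 • β := by
    simp only [g2PositiveRoots_apply, Prod.fst_add, Prod.snd_add]
    module
  rw [hsum]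
  exact smul_add_smul_notMem_range_g2PositiveRoots hαα hββ hαβ hij

lemma G2BracketTable.of_roots {α β : EuclideanSpace ℝ (Fin 2)}
    (hαα : ⟪α, α⟫ = 1) (hββ : ⟪β, β⟫ = 3) (hαβ : ⟪α, β⟫ = -(3/2))
    (h01 : ⁅e 0, e 1⁆ = c₁ • e 2) (h02 : ⁅e 0, e 2⁆ = c₂ • e 3) (h03 : ⁅e 0, e 3⁆ = c₃ • e 4)
    (h41 : ⁅e 4, e 1⁆ = c₄ • e 5) (h23 : ⁅e 2, e 3⁆ = c₅ • e 5)
    (h0 : ∀ i j : Fin 6, g2PositiveRoots α β i + g2PositiveRoots α β j ∉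
      Set.range (g2PositiveRoots α β) → ⁅e i, e j⁆ = 0) :
    G2BracketTable e c₁ c₂ c₃ c₄ c₅ := by
  have hz := lie_eq_zero_of_g2Quad_notMem hαα hββ hαβ h0
  refine ⟨h01, h02, h03, hz 0 4 ?_, hz 0 5 ?_, hz 1 2 ?_, hz 1 3 ?_, h41, hz 1 5 ?_, h23,
    hz 2 4 ?_, hz 2 5 ?_, hz 3 4 ?_, hz 3 5 ?_, hz 4 5 ?_⟩ <;>
  simp only [g2Quad, g2Coeff, Matrix.cons_val_zero, Matrix.cons_val_one, Matrix.cons_val,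
    Prod.mk_add_mk, Set.mem_insert_iff, Set.mem_singleton_iff] <;>
  norm_num

namespace G2BracketTable

lemma jacobi (hT : G2BracketTable e c₁ c₂ c₃ c₄ c₅) : c₁ * c₅ = c₃ * c₄ := by
  have hj : ⁅⁅e 0, e 1⁆, e 3⁆ = ⁅e 0, ⁅e 1, e 3⁆⁆ - ⁅e 1, ⁅e 0, e 3⁆⁆ := lie_lie _ _ _
  rw [hT.lie_zero_one, hT.lie_zero_three, hT.lie_one_three, lie_zero, smul_lie, hT.lie_two_three,
    lie_smul, ← lie_skew, hT.lie_four_one, smul_smul, smul_neg, smul_smul, zero_sub, neg_neg] at hj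
  exact smul_left_injective ℂ (e.ne_zero 5) hj

end G2BracketTable

structure G2NegAdTable (e : Module.Basis (Fin 6) ℂ n) (c₁ c₂ c₃ c₄ c₅ : ℂ) (t : Fin 6 → ℂ)
    (A : Module.End ℂ n) : Prop where
  apply_zero : A (e 0) = (c₁ * t 1) • e 2 + (c₂ * t 2) • e 3 + (c₃ * t 3) • e 4
  apply_one : A (e 1) = -(c₁ * t 0) • e 2 - (c₄ * t 4) • e 5
  apply_two : A (e 2) = -(c₂ * t 0) • e 3 + (c₅ * t 3) • e 5
  apply_three : A (e 3) = -(c₃ * t 0) • e 4 - (c₅ * t 2) • e 5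
  apply_four : A (e 4) = (c₄ * t 1) • e 5
  apply_five : A (e 5) = 0

lemma G2BracketTable.negAdTable (hT : G2BracketTable e c₁ c₂ c₃ c₄ c₅) (t : Fin 6 → ℂ) :
    G2NegAdTable e c₁ c₂ c₃ c₄ c₅ t (-LieAlgebra.ad ℂ n (∑ i, t i • e i)) := by
  have skew {i j : Fin 6} {w : n} (h : ⁅e i, e j⁆ = w) : ⁅e j, e i⁆ = -w := by
    rw [← lie_skew, h]
  constructor <;>
  simp only [LinearMap.neg_apply, LieAlgebra.ad_apply, lie_skew, lie_sum, lie_smul] <;>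
  simp only [Fin.sum_univ_six, lie_self, hT.lie_zero_one, hT.lie_zero_two, hT.lie_zero_three,
    hT.lie_zero_four, hT.lie_zero_five, hT.lie_one_two, hT.lie_one_three, hT.lie_four_one,
    hT.lie_one_five, hT.lie_two_three, hT.lie_two_four, hT.lie_two_five, hT.lie_three_four,
    hT.lie_three_five, hT.lie_four_five, skew hT.lie_zero_one, skew hT.lie_zero_two,
    skew hT.lie_zero_three, skew hT.lie_zero_four, skew hT.lie_zero_five, skew hT.lie_one_two,
    skew hT.lie_one_three, skew hT.lie_four_one, skew hT.lie_one_five, skew hT.lie_two_three,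
    skew hT.lie_two_four, skew hT.lie_two_five, skew hT.lie_three_four, skew hT.lie_three_five,
    skew hT.lie_four_five] <;>
  module

noncomputable def g2OrbitCoords (c₁ c₂ c₃ c₄ c₅ s : ℂ) (t : Fin 6 → ℂ) : Fin 6 → ℂ :=
  ![s * ((c₁ * c₅ + c₃ * c₄) * t 1 * t 3 / 2 - c₂ * c₅ * t 2 ^ 2 / 2
      + (c₁ * c₂ * c₅ - c₂ * c₃ * c₄) * t 0 * t 1 * t 2 / 6
      + c₁ * c₂ * c₃ * c₄ * t 0 ^ 2 * t 1 ^ 2 / 24),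
    s * (-(c₄ * t 4) - c₁ * c₅ * t 0 * t 3 / 2 - c₁ * c₂ * c₅ * t 0 ^ 2 * t 2 / 6
      - c₁ * c₂ * c₃ * c₄ * t 0 ^ 3 * t 1 / 24),
    s * (c₅ * t 3 + c₂ * c₅ * t 0 * t 2 / 2 + c₂ * c₃ * c₄ * t 0 ^ 2 * t 1 / 6),
    s * (-(c₅ * t 2) - c₃ * c₄ * t 0 * t 1 / 2),
    s * (c₄ * t 1),
    s]

namespace G2NegAdTable

variable {t : Fin 6 → ℂ} {A : Module.End ℂ n}

lemma pow_five (hA : G2NegAdTable e c₁ c₂ c₃ c₄ c₅ t A) : A ^ 5 = 0 := by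
  refine e.ext fun i ↦ ?_
  fin_cases i <;> simp [pow_succ, Module.End.mul_apply, hA.apply_zero, hA.apply_one,
    hA.apply_two, hA.apply_three, hA.apply_four, hA.apply_five]

lemma expNil_apply (hA : G2NegAdTable e c₁ c₂ c₃ c₄ c₅ t A) (v : n) :
    expNil A v = v + A v + (2:ℂ)⁻¹ • A (A v) + (6:ℂ)⁻¹ • A (A (A v))
      + (24:ℂ)⁻¹ • A (A (A (A v))) := by
  rw [expNil_eq_sum_range_of_pow_eq_zero hA.pow_five]
  simp [Finset.sum_range_succ, pow_succ, Nat.factorial]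

lemma coord_comp_expNil (hA : G2NegAdTable e c₁ c₂ c₃ c₄ c₅ t A) (ξ : Fin 6 → ℂ) (i : Fin 6) :
    ((∑ j ∈ {5}, ξ j • e.coord j).comp (expNil A)) (e i) =
      g2OrbitCoords c₁ c₂ c₃ c₄ c₅ (ξ 5) t i := by
  rw [LinearMap.comp_apply, Finset.sum_singleton, LinearMap.smul_apply, hA.expNil_apply,
    smul_eq_mul]
  fin_cases i <;>
  simp only [Fin.isValue, Fin.zero_eta, Fin.mk_one, Fin.reduceFinMk, hA.apply_zero, hA.apply_one,
    hA.apply_two, hA.apply_three, hA.apply_four, hA.apply_five, map_add, map_sub,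
    map_smul, map_zero, Module.Basis.coord_apply, Module.Basis.repr_self, Finsupp.single_apply,
    Fin.reduceEq, if_true, if_false, smul_eq_mul, g2OrbitCoords, Matrix.cons_val_zero,
    Matrix.cons_val_one, Matrix.cons_val] <;>
  ring

end G2NegAdTable

lemma G2BracketTable.mem_coadjointOrbit_iff (hT : G2BracketTable e c₁ c₂ c₃ c₄ c₅)
    (ξ : Fin 6 → ℂ) (lam : Module.Dual ℂ n) :
    lam ∈ coadjointOrbit e {5} ξ ↔
      ∃ t, g2OrbitCoords c₁ c₂ c₃ c₄ c₅ (ξ 5) t = fun i ↦ lam (e i) := by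
  constructor
  · rintro ⟨x, rfl⟩
    refine ⟨fun i ↦ e.repr x i, funext fun i ↦ ?_⟩
    rw [← (hT.negAdTable _).coord_comp_expNil ξ i, e.sum_repr]
  · rintro ⟨t, ht⟩
    exact ⟨∑ i, t i • e i, e.ext fun i ↦
      (congrFun ht i).symm.trans ((hT.negAdTable t).coord_comp_expNil ξ i).symm⟩

end BracketTable

def g2Invariant (c₂ c₃ c₅ : ℂ) (v : Fin 6 → ℂ) : ℂ :=
  2 * c₅ * v 0 * v 5 - 2 * c₃ * v 2 * v 4 + c₂ * v 3 ^ 2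

section OrbitCoords

variable {c₁ c₂ c₃ c₄ c₅ : ℂ}

lemma g2Invariant_g2OrbitCoords (h : c₁ * c₅ = c₃ * c₄) (s : ℂ) (t : Fin 6 → ℂ) :
    g2Invariant c₂ c₃ c₅ (g2OrbitCoords c₁ c₂ c₃ c₄ c₅ s t) = 0 := by
  simp only [g2Invariant, g2OrbitCoords, Matrix.cons_val_zero, Matrix.cons_val]
  linear_combination (s ^ 2 * (c₅ * t 1 * t 3 + c₂ * c₅ * t 0 * t 1 * t 2 / 3
    + c₂ * c₃ * c₄ * t 0 ^ 2 * t 1 ^ 2 / 12)) * h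

lemma exists_g2OrbitCoords_eq (h : c₁ * c₅ = c₃ * c₄) (hc₄ : c₄ ≠ 0) (hc₅ : c₅ ≠ 0) {s : ℂ}
    (hs : s ≠ 0) {v : Fin 6 → ℂ} (hv : v 5 = s) (hinv : g2Invariant c₂ c₃ c₅ v = 0) :
    ∃ t, g2OrbitCoords c₁ c₂ c₃ c₄ c₅ s t = v := by
  refine ⟨![0, v 4 / (s * c₄), -v 3 / (s * c₅), v 2 / (s * c₅), -v 1 / (s * c₄), 0], ?_⟩
  funext i
  simp only [g2Invariant] at hinv
  fin_cases i <;>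
  simp only [g2OrbitCoords, Fin.zero_eta, Fin.mk_one, Fin.reduceFinMk, Matrix.cons_val_zero,
    Matrix.cons_val_one, Matrix.cons_val, mul_zero, zero_mul, zero_div, add_zero, sub_zero,
    ne_eq, OfNat.ofNat_ne_zero, not_false_eq_true, zero_pow]
  · field_simp
    linear_combination v 4 * v 2 * h - c₄ * hinv + 2 * c₄ * c₅ * v 0 * hv
  all_goals first | exact hv.symm | field_simp

end OrbitCoords

theorem stmt4_general {n : Type*} [LieRing n] [LieAlgebra ℂ n]
    (α β : EuclideanSpace ℝ (Fin 2))
    (hαα : ⟪α, α⟫ = 1) (hββ : ⟪β, β⟫ = 3) (hαβ : ⟪α, β⟫ = -(3/2))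
    -- the six positive roots of `G₂`: `α, β, α+β, 2α+β, 3α+β, 3α+2β`, indexed by `Fin 6`
    (root : Fin 6 → EuclideanSpace ℝ (Fin 2))
    (hroot : root = ![α, β, α + β, (2:ℝ) • α + β, (3:ℝ) • α + β, (3:ℝ) • α + (2:ℝ) • β])
    (c₁ c₂ c₃ c₄ c₅ : ℂ)
    (hc₄ : c₄ ≠ 0) (hc₅ : c₅ ≠ 0)
    (e : Module.Basis (Fin 6) ℂ n)
    (h01 : ⁅e 0, e 1⁆ = c₁ • e 2)
    (h02 : ⁅e 0, e 2⁆ = c₂ • e 3)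
    (h03 : ⁅e 0, e 3⁆ = c₃ • e 4)
    (h41 : ⁅e 4, e 1⁆ = c₄ • e 5)
    (h23 : ⁅e 2, e 3⁆ = c₅ • e 5)
    (h0 : ∀ i j : Fin 6, root i + root j ∉ Set.range root → ⁅e i, e j⁆ = 0)
    (ξ : Fin 6 → ℂ) (hξ : ξ 5 ≠ 0)
    (lam : Module.Dual ℂ n) :
    lam ∈ coadjointOrbit e {5} ξ ↔
      (lam (e 5) = ξ 5 ∧
        2 * c₅ * lam (e 0) * lam (e 5) - 2 * c₃ * lam (e 2) * lam (e 4) +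
          c₂ * lam (e 3) ^ 2 = 0) := by
  subst hroot
  have hT := G2BracketTable.of_roots hαα hββ hαβ h01 h02 h03 h41 h23 h0
  rw [hT.mem_coadjointOrbit_iff]
  constructor
  · rintro ⟨t, ht⟩
    have hinv := g2Invariant_g2OrbitCoords (c₂ := c₂) hT.jacobi (ξ 5) t
    rw [ht] at hinv
    exact ⟨(congrFun ht 5).symm, hinv⟩
  · rintro ⟨h5, hinv⟩
    exact exists_g2OrbitCoords_eq hT.jacobi hc₄ hc₅ hξ h5 hinv

theorem stmt4 {n : Type*} [LieRing n] [LieAlgebra ℂ n]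
    (α β : EuclideanSpace ℝ (Fin 2))
    (hαα : ⟪α, α⟫ = 1) (hββ : ⟪β, β⟫ = 3) (hαβ : ⟪α, β⟫ = -(3/2))
    -- the six positive roots of `G₂`: `α, β, α+β, 2α+β, 3α+β, 3α+2β`, indexed by `Fin 6`
    (root : Fin 6 → EuclideanSpace ℝ (Fin 2))
    (hroot : root = ![α, β, α + β, (2:ℝ) • α + β, (3:ℝ) • α + β, (3:ℝ) • α + (2:ℝ) • β])
    (c₁ c₂ c₃ c₄ c₅ : ℂ)
    (hc₁ : c₁ ≠ 0) (hc₂ : c₂ ≠ 0) (hc₃ : c₃ ≠ 0) (hc₄ : c₄ ≠ 0) (hc₅ : c₅ ≠ 0)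
    (e : Module.Basis (Fin 6) ℂ n)
    (h01 : ⁅e 0, e 1⁆ = c₁ • e 2)
    (h02 : ⁅e 0, e 2⁆ = c₂ • e 3)
    (h03 : ⁅e 0, e 3⁆ = c₃ • e 4)
    (h41 : ⁅e 4, e 1⁆ = c₄ • e 5)
    (h23 : ⁅e 2, e 3⁆ = c₅ • e 5)
    (h0 : ∀ i j : Fin 6, root i + root j ∉ Set.range root → ⁅e i, e j⁆ = 0)
    (hnil : ∀ x : n, IsNilpotent (LieAlgebra.ad ℂ n x))
    (ξ : Fin 6 → ℂ) (hξ : ξ 5 ≠ 0)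
    (lam : Module.Dual ℂ n) :
    lam ∈ coadjointOrbit e {5} ξ ↔
      (lam (e 5) = ξ 5 ∧
        2 * c₅ * lam (e 0) * lam (e 5) - 2 * c₃ * lam (e 2) * lam (e 4) +
          c₂ * lam (e 3) ^ 2 = 0) :=
  stmt4_general α β hαα hββ hαβ root hroot c₁ c₂ c₃ c₄ c₅ hc₄ hc₅ e h01 h02 h03 h41 h23 h0 ξ hξ lam
end

section
/- Let D={β, 3α+β} and let ξ:D→ℂ∖{0} be a map. A linear form λ∈𝔫* belongs to the basic subvariety 𝒪_{D,ξ} if and only if λ_{3α+β}=ξ(3α+β), λ_{3α+2β}=0, 6c₃²λ_βλ_{3α+β}² − c₁c₂λ_{2α+β}³ = 6c₃²ξ(β)ξ(3α+β)², and 2c₃λ_{α+β}λ_{3α+β} − c₂λ_{2α+β}² = 0 (with λ_α arbitrary). -/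
open scoped RealInnerProductSpace

/-!
The form `e_β*` vanishes on `[𝔫, 𝔫]` (no two positive roots add up to `β`), so its coadjoint
orbit is a point. For `e_{3α+β}*` the transposed action of `−ad x` moves down the chain
`e_{3α+β}* → e_{2α+β}* → e_{α+β}* → e_β*`, each step multiplying by `x_α` (plus `e_α*`-terms),
so the orbit is the two-parameter family `G2.orbitForm t u` with `t = x_α`. Adding the point
`ξ(β) e_β*` and eliminating `t = −λ_{2α+β} / (c₃ ξ(3α+β))` and `u` leaves exactly the cubic and
the quadratic equation.
-/

open scoped Pointwise

section Exponential

variable {M N : Type*} [AddCommGroup M] [Module ℂ M] [AddCommGroup N] [Module ℂ N]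

theorem LinearMap.comp_expNil_eq_sum {A : Module.End ℂ M} (hA : IsNilpotent A)
    (f : M →ₗ[ℂ] N) {m : ℕ} (hf : f ∘ₗ A ^ m = 0) :
    f ∘ₗ expNil A = ∑ k ∈ Finset.range m, (k.factorial : ℂ)⁻¹ • f ∘ₗ A ^ k := by
  have hA_pow : ∀ k ≥ nilpotencyClass A, (k.factorial : ℂ)⁻¹ • f ∘ₗ A ^ k = 0 := fun k hk => by
    rw [pow_eq_zero_of_le hk (pow_nilpotencyClass hA), LinearMap.comp_zero, smul_zero]
  have hf_pow : ∀ k ≥ m, (k.factorial : ℂ)⁻¹ • f ∘ₗ A ^ k = 0 := fun k hk => by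
    rw [← Nat.add_sub_cancel' hk, pow_add, Module.End.mul_eq_comp, ← LinearMap.comp_assoc, hf,
      LinearMap.zero_comp, smul_zero]
  have hexp : f ∘ₗ expNil A =
      ∑ k ∈ Finset.range (nilpotencyClass A), (k.factorial : ℂ)⁻¹ • f ∘ₗ A ^ k := by
    ext v
    simp [expNil, LinearMap.sum_apply]
  rw [hexp, ← Finset.eventually_constant_sum hA_pow (Nat.le_add_left _ m),
    ← Finset.eventually_constant_sum hf_pow (Nat.le_add_right m _)]

theorem LinearMap.comp_expNil_of_comp_eq_zero {A : Module.End ℂ M} (hA : IsNilpotent A)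
    (f : M →ₗ[ℂ] N) (hf : f ∘ₗ A = 0) : f ∘ₗ expNil A = f := by
  simp [LinearMap.comp_expNil_eq_sum hA f (m := 1) (by simpa using hf), Module.End.one_eq_id]

end Exponential

section CoadjointOrbits

variable {ι L : Type*} [LieRing L] [LieAlgebra ℂ L]

theorem mem_coadjointOrbit_singleton (e : Module.Basis ι ℂ L) (i : ι) (ξ : ι → ℂ)
    (f : Module.Dual ℂ L) :
    f ∈ coadjointOrbit e {i} ξ ↔
      ∃ x : L, f = ξ i • e.coord i ∘ₗ expNil (-(LieAlgebra.ad ℂ L x)) := by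
  simp [coadjointOrbit, LinearMap.smul_comp]

theorem basicSubvariety_pair [DecidableEq ι] (e : Module.Basis ι ℂ L) {i j : ι} (hij : i ≠ j)
    (ξ : ι → ℂ) :
    basicSubvariety e {i, j} ξ = coadjointOrbit e {i} ξ + coadjointOrbit e {j} ξ := by
  ext lam
  simp only [basicSubvariety, Set.mem_ofPred_eq, Set.mem_add, Finset.sum_pair hij,
    Finset.forall_mem_insert, Finset.mem_singleton, forall_eq]
  constructor
  · rintro ⟨μ, ⟨hi, hj⟩, rfl⟩
    exact ⟨μ i, hi, μ j, hj, rfl⟩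
  · rintro ⟨μ, hμ, ν, hν, rfl⟩
    refine ⟨fun k => if k = i then μ else ν, ⟨?_, ?_⟩, ?_⟩ <;> simp [hij.symm, hμ, hν]

end CoadjointOrbits

theorem Module.Basis.repr_lie {R ι L : Type*} [CommRing R] [Fintype ι] [LieRing L]
    [LieAlgebra R L] (e : Module.Basis ι R L) (x y : L) (m : ι) :
    e.repr ⁅x, y⁆ m = ∑ i, ∑ j, e.repr x i * e.repr y j * e.repr ⁅e i, e j⁆ m := by
  calc e.repr ⁅x, y⁆ m = e.repr ⁅∑ i, e.repr x i • e i, ∑ j, e.repr y j • e j⁆ m := by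
        rw [e.sum_repr, e.sum_repr]
    _ = _ := by
        simp only [sum_lie, lie_sum, smul_lie, lie_smul, map_sum, map_smul,
          Finsupp.coe_finsetSum, Finset.sum_apply, Finsupp.smul_apply, smul_eq_mul]
        rw [Finset.sum_comm]
        simp only [Finset.mul_sum]
        exact Finset.sum_congr rfl fun i _ => Finset.sum_congr rfl fun j _ => by ring

theorem linearIndependent_pair_of_inner_sq_ne {E : Type*} [NormedAddCommGroup E]
    [InnerProductSpace ℝ E] {α β : E} (h : ⟪α, β⟫ ^ 2 ≠ ⟪α, α⟫ * ⟪β, β⟫) :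
    LinearIndependent ℝ ![α, β] := by
  refine LinearIndependent.pair_iff.mpr fun s t hst => ?_
  have hα : ⟪s • α + t • β, α⟫ = 0 := by rw [hst, inner_zero_left]
  have hβ : ⟪s • α + t • β, β⟫ = 0 := by rw [hst, inner_zero_left]
  simp only [inner_add_left, real_inner_smul_left, real_inner_comm α β] at hα hβ
  have hdet : ⟪α, α⟫ * ⟪β, β⟫ - ⟪α, β⟫ ^ 2 ≠ 0 := sub_ne_zero.mpr h.symm
  refine ⟨(mul_eq_zero.mp ?_).resolve_right hdet, (mul_eq_zero.mp ?_).resolve_right hdet⟩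
  · linear_combination ⟪β, β⟫ * hα - ⟪α, β⟫ * hβ
  · linear_combination ⟪α, α⟫ * hβ - ⟪α, β⟫ * hα

namespace G2

/-- `(a, b)` stands for the positive root `a α + b β`, in the order `α, β, α+β, 2α+β, 3α+β, 3α+2β`
of the indices. -/
def rootCoeff : Fin 6 → ℕ × ℕ := ![(1, 0), (0, 1), (1, 1), (2, 1), (3, 1), (3, 2)]

theorem lie_eq_zero_of_rootCoeff {E n : Type*} [AddCommGroup E] [Module ℝ E] [LieRing n]
    {α β : E} (hind : LinearIndependent ℝ ![α, β]) {root : Fin 6 → E}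
    (hroot : root = ![α, β, α + β, (2:ℝ) • α + β, (3:ℝ) • α + β, (3:ℝ) • α + (2:ℝ) • β])
    {e : Fin 6 → n} (h0 : ∀ i j : Fin 6, root i + root j ∉ Set.range root → ⁅e i, e j⁆ = 0)
    {i j : Fin 6} (hij : ∀ k, rootCoeff k ≠ rootCoeff i + rootCoeff j) : ⁅e i, e j⁆ = 0 := by
  have hcoeff : ∀ k, root k = ((rootCoeff k).1 : ℝ) • α + ((rootCoeff k).2 : ℝ) • β := by
    intro k; fin_cases k <;> simp [hroot, rootCoeff]
  refine h0 i j fun ⟨k, hk⟩ => hij k ?_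
  rw [hcoeff, hcoeff, hcoeff] at hk
  obtain ⟨h1, h2⟩ := hind.eq_of_pair <| hk.trans <| show _ =
      ((rootCoeff i + rootCoeff j).1 : ℝ) • α + ((rootCoeff i + rootCoeff j).2 : ℝ) • β by
    simp only [Prod.fst_add, Prod.snd_add]; push_cast; module
  exact Prod.ext (by exact_mod_cast h1) (by exact_mod_cast h2)

def bracket {V : Type*} [AddCommGroup V] [Module ℂ V] (c₁ c₂ c₃ c₄ c₅ : ℂ) (e : Fin 6 → V) :
    Fin 6 → Fin 6 → V :=
  ![![0, c₁ • e 2, c₂ • e 3, c₃ • e 4, 0, 0],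
    ![-(c₁ • e 2), 0, 0, 0, -(c₄ • e 5), 0],
    ![-(c₂ • e 3), 0, 0, c₅ • e 5, 0, 0],
    ![-(c₃ • e 4), 0, -(c₅ • e 5), 0, 0, 0],
    ![0, c₄ • e 5, 0, 0, 0, 0],
    ![0, 0, 0, 0, 0, 0]]

theorem lie_eq_bracket {n : Type*} [LieRing n] [LieAlgebra ℂ n] {c₁ c₂ c₃ c₄ c₅ : ℂ}
    {e : Fin 6 → n}
    (h01 : ⁅e 0, e 1⁆ = c₁ • e 2) (h02 : ⁅e 0, e 2⁆ = c₂ • e 3) (h03 : ⁅e 0, e 3⁆ = c₃ • e 4)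
    (h41 : ⁅e 4, e 1⁆ = c₄ • e 5) (h23 : ⁅e 2, e 3⁆ = c₅ • e 5)
    (hzero : ∀ i j, (∀ k, rootCoeff k ≠ rootCoeff i + rootCoeff j) → ⁅e i, e j⁆ = 0)
    (i j : Fin 6) :
    ⁅e i, e j⁆ = bracket c₁ c₂ c₃ c₄ c₅ e i j := by
  have skew : ∀ {x y z : n}, ⁅x, y⁆ = z → ⁅y, x⁆ = -z := fun h => by rw [← lie_skew, h]
  fin_cases i <;> fin_cases j <;> simp [bracket]
  all_goals first
    | assumption
    | exact skew ‹_›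
    | exact hzero _ _ (by decide)

variable {n : Type*} [LieRing n] [LieAlgebra ℂ n] {e : Module.Basis (Fin 6) ℂ n}
  {c₁ c₂ c₃ c₄ c₅ : ℂ}

theorem coord_comp_neg_ad (hLie : ∀ i j, ⁅e i, e j⁆ = bracket c₁ c₂ c₃ c₄ c₅ e i j) (x : n) :
    e.coord 0 ∘ₗ (-(LieAlgebra.ad ℂ n x)) = 0 ∧
    e.coord 1 ∘ₗ (-(LieAlgebra.ad ℂ n x)) = 0 ∧
    e.coord 2 ∘ₗ (-(LieAlgebra.ad ℂ n x)) =
      c₁ • (e.repr x 1 • e.coord 0 - e.repr x 0 • e.coord 1) ∧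
    e.coord 3 ∘ₗ (-(LieAlgebra.ad ℂ n x)) =
      c₂ • (e.repr x 2 • e.coord 0 - e.repr x 0 • e.coord 2) ∧
    e.coord 4 ∘ₗ (-(LieAlgebra.ad ℂ n x)) =
      c₃ • (e.repr x 3 • e.coord 0 - e.repr x 0 • e.coord 3) := by
  refine ⟨?_, ?_, ?_, ?_, ?_⟩ <;> ext v <;>
    simp [e.repr_lie, hLie, bracket, Fin.sum_univ_six] <;> ring

noncomputable def orbitForm (e : Module.Basis (Fin 6) ℂ n) (c₁ c₂ c₃ t u : ℂ) :
    Module.Dual ℂ n :=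
  e.coord 4 - (c₃ * t) • e.coord 3 + (c₂ * c₃ / 2 * t ^ 2) • e.coord 2
    - (c₁ * c₂ * c₃ / 6 * t ^ 3) • e.coord 1 + u • e.coord 0

theorem coord_one_comp_expNil (hLie : ∀ i j, ⁅e i, e j⁆ = bracket c₁ c₂ c₃ c₄ c₅ e i j)
    {x : n} (hx : IsNilpotent (LieAlgebra.ad ℂ n x)) :
    e.coord 1 ∘ₗ expNil (-(LieAlgebra.ad ℂ n x)) = e.coord 1 :=
  LinearMap.comp_expNil_of_comp_eq_zero hx.neg _ (coord_comp_neg_ad hLie x).2.1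

theorem coord_four_comp_expNil (hLie : ∀ i j, ⁅e i, e j⁆ = bracket c₁ c₂ c₃ c₄ c₅ e i j)
    {x : n} (hx : IsNilpotent (LieAlgebra.ad ℂ n x)) :
    e.coord 4 ∘ₗ expNil (-(LieAlgebra.ad ℂ n x)) =
      orbitForm e c₁ c₂ c₃ (e.repr x 0) (c₃ * e.repr x 3 - c₂ * c₃ / 2 * e.repr x 0 * e.repr x 2
        + c₁ * c₂ * c₃ / 6 * e.repr x 0 ^ 2 * e.repr x 1) := by
  obtain ⟨h0, h1, h2, h3, h4⟩ := coord_comp_neg_ad hLie x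
  set A := -(LieAlgebra.ad ℂ n x)
  have hsucc : ∀ (f : Module.Dual ℂ n) k, f ∘ₗ A ^ (k + 1) = (f ∘ₗ A ^ k) ∘ₗ A := fun f k => by
    rw [pow_succ, Module.End.mul_eq_comp, LinearMap.comp_assoc]
  have hA₁ : e.coord 4 ∘ₗ A ^ 1 = c₃ • (e.repr x 3 • e.coord 0 - e.repr x 0 • e.coord 3) := by
    rw [pow_one, h4]
  have hA₂ : e.coord 4 ∘ₗ A ^ 2 =
      (c₂ * c₃ * e.repr x 0) • (e.repr x 0 • e.coord 2 - e.repr x 2 • e.coord 0) := by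
    rw [hsucc, hA₁]
    simp only [LinearMap.smul_comp, LinearMap.sub_comp, h0, h3]
    module
  have hA₃ : e.coord 4 ∘ₗ A ^ 3 =
      (c₁ * c₂ * c₃ * e.repr x 0 ^ 2) • (e.repr x 1 • e.coord 0 - e.repr x 0 • e.coord 1) := by
    rw [hsucc, hA₂]
    simp only [LinearMap.smul_comp, LinearMap.sub_comp, h0, h2]
    module
  have hA₄ : e.coord 4 ∘ₗ A ^ 4 = 0 := by
    rw [hsucc, hA₃]
    simp only [LinearMap.smul_comp, LinearMap.sub_comp, h0, h1]
    module
  rw [LinearMap.comp_expNil_eq_sum (A := A) hx.neg _ hA₄]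
  simp only [Finset.sum_range_succ, Finset.sum_range_zero, hA₁, hA₂, hA₃, pow_zero,
    Module.End.one_eq_id, LinearMap.comp_id, orbitForm, Nat.factorial, Nat.cast_one, inv_one,
    one_smul, zero_add, Nat.succ_eq_add_one, mul_one, Nat.reduceAdd, Nat.cast_ofNat, Nat.reduceMul]
  module

theorem coadjointOrbit_one (hLie : ∀ i j, ⁅e i, e j⁆ = bracket c₁ c₂ c₃ c₄ c₅ e i j)
    (hnil : ∀ x : n, IsNilpotent (LieAlgebra.ad ℂ n x)) (ξ : Fin 6 → ℂ) :
    coadjointOrbit e {1} ξ = {ξ 1 • e.coord 1} := by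
  ext f
  simp [mem_coadjointOrbit_singleton, coord_one_comp_expNil hLie (hnil _)]

theorem coadjointOrbit_four (hLie : ∀ i j, ⁅e i, e j⁆ = bracket c₁ c₂ c₃ c₄ c₅ e i j)
    (hnil : ∀ x : n, IsNilpotent (LieAlgebra.ad ℂ n x)) (hc₃ : c₃ ≠ 0) (ξ : Fin 6 → ℂ) :
    coadjointOrbit e {4} ξ = Set.range fun p : ℂ × ℂ => ξ 4 • orbitForm e c₁ c₂ c₃ p.1 p.2 := by
  ext f
  simp only [mem_coadjointOrbit_singleton, coord_four_comp_expNil hLie (hnil _), Set.mem_range,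
    Prod.exists]
  constructor
  · rintro ⟨x, rfl⟩
    exact ⟨_, _, rfl⟩
  · rintro ⟨t, u, rfl⟩
    refine ⟨t • e 0 + (u / c₃) • e 3, ?_⟩
    simp only [map_add, map_smul, Module.Basis.repr_self, Finsupp.smul_single, smul_eq_mul,
      mul_one, Finsupp.coe_add, Pi.add_apply, Finsupp.single_eq_same, ne_eq, Fin.reduceEq,
      not_false_eq_true, Finsupp.single_eq_of_ne, add_zero, zero_add, mul_zero, sub_zero]
    field_simp

theorem exists_add_smul_orbitForm_eq_iff (hc₃ : c₃ ≠ 0) {ξ₁ ξ₄ : ℂ} (hξ₄ : ξ₄ ≠ 0)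
    (lam : Module.Dual ℂ n) :
    (∃ t u, ξ₁ • e.coord 1 + ξ₄ • orbitForm e c₁ c₂ c₃ t u = lam) ↔
      (lam (e 4) = ξ₄ ∧ lam (e 5) = 0 ∧
        6 * c₃ ^ 2 * lam (e 1) * lam (e 4) ^ 2 - c₁ * c₂ * lam (e 3) ^ 3 =
          6 * c₃ ^ 2 * ξ₁ * ξ₄ ^ 2 ∧
        2 * c₃ * lam (e 2) * lam (e 4) - c₂ * lam (e 3) ^ 2 = 0) := by
  constructor
  · rintro ⟨t, u, rfl⟩
    refine ⟨?_, ?_, ?_, ?_⟩ <;> simp [orbitForm] <;> ring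
  · rintro ⟨h4, h5, hcube, hquad⟩
    refine ⟨-lam (e 3) / (c₃ * ξ₄), lam (e 0) / ξ₄, e.ext fun j => ?_⟩
    rw [h4] at hcube hquad
    fin_cases j <;> simp [orbitForm] <;> try field_simp
    · linear_combination -hcube
    · linear_combination -hquad
    · exact h4.symm
    · exact h5.symm

end G2

theorem stmt6_general {n : Type*} [LieRing n] [LieAlgebra ℂ n]
    (α β : EuclideanSpace ℝ (Fin 2))
    (hαα : ⟪α, α⟫ = 1) (hββ : ⟪β, β⟫ = 3) (hαβ : ⟪α, β⟫ = -(3/2))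
    -- the six positive roots of `G₂`: `α, β, α+β, 2α+β, 3α+β, 3α+2β`, indexed by `Fin 6`
    (root : Fin 6 → EuclideanSpace ℝ (Fin 2))
    (hroot : root = ![α, β, α + β, (2:ℝ) • α + β, (3:ℝ) • α + β, (3:ℝ) • α + (2:ℝ) • β])
    (c₁ c₂ c₃ c₄ c₅ : ℂ)
    (hc₃ : c₃ ≠ 0)
    (e : Module.Basis (Fin 6) ℂ n)
    (h01 : ⁅e 0, e 1⁆ = c₁ • e 2)
    (h02 : ⁅e 0, e 2⁆ = c₂ • e 3)
    (h03 : ⁅e 0, e 3⁆ = c₃ • e 4)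
    (h41 : ⁅e 4, e 1⁆ = c₄ • e 5)
    (h23 : ⁅e 2, e 3⁆ = c₅ • e 5)
    (h0 : ∀ i j : Fin 6, root i + root j ∉ Set.range root → ⁅e i, e j⁆ = 0)
    (hnil : ∀ x : n, IsNilpotent (LieAlgebra.ad ℂ n x))
    (ξ : Fin 6 → ℂ) (hξ₄ : ξ 4 ≠ 0)
    (lam : Module.Dual ℂ n) :
    lam ∈ basicSubvariety e {1, 4} ξ ↔
      (lam (e 4) = ξ 4 ∧ lam (e 5) = 0 ∧
        6 * c₃ ^ 2 * lam (e 1) * lam (e 4) ^ 2 - c₁ * c₂ * lam (e 3) ^ 3 =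
          6 * c₃ ^ 2 * ξ 1 * ξ 4 ^ 2 ∧
        2 * c₃ * lam (e 2) * lam (e 4) - c₂ * lam (e 3) ^ 2 = 0) := by
  have hind : LinearIndependent ℝ ![α, β] :=
    linearIndependent_pair_of_inner_sq_ne (by rw [hαα, hββ, hαβ]; norm_num)
  have hLie : ∀ i j, ⁅e i, e j⁆ = G2.bracket c₁ c₂ c₃ c₄ c₅ e i j :=
    G2.lie_eq_bracket h01 h02 h03 h41 h23 fun _ _ hij =>
      G2.lie_eq_zero_of_rootCoeff hind hroot h0 hij
  rw [basicSubvariety_pair e (by decide) ξ, G2.coadjointOrbit_one hLie hnil,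
    G2.coadjointOrbit_four hLie hnil hc₃, Set.singleton_add, ← Set.range_comp, Set.mem_range,
    Prod.exists]
  exact G2.exists_add_smul_orbitForm_eq_iff hc₃ hξ₄ lam

theorem stmt6 {n : Type*} [LieRing n] [LieAlgebra ℂ n]
    (α β : EuclideanSpace ℝ (Fin 2))
    (hαα : ⟪α, α⟫ = 1) (hββ : ⟪β, β⟫ = 3) (hαβ : ⟪α, β⟫ = -(3/2))
    -- the six positive roots of `G₂`: `α, β, α+β, 2α+β, 3α+β, 3α+2β`, indexed by `Fin 6`
    (root : Fin 6 → EuclideanSpace ℝ (Fin 2))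
    (hroot : root = ![α, β, α + β, (2:ℝ) • α + β, (3:ℝ) • α + β, (3:ℝ) • α + (2:ℝ) • β])
    (c₁ c₂ c₃ c₄ c₅ : ℂ)
    (hc₁ : c₁ ≠ 0) (hc₂ : c₂ ≠ 0) (hc₃ : c₃ ≠ 0) (hc₄ : c₄ ≠ 0) (hc₅ : c₅ ≠ 0)
    (e : Module.Basis (Fin 6) ℂ n)
    (h01 : ⁅e 0, e 1⁆ = c₁ • e 2)
    (h02 : ⁅e 0, e 2⁆ = c₂ • e 3)
    (h03 : ⁅e 0, e 3⁆ = c₃ • e 4)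
    (h41 : ⁅e 4, e 1⁆ = c₄ • e 5)
    (h23 : ⁅e 2, e 3⁆ = c₅ • e 5)
    (h0 : ∀ i j : Fin 6, root i + root j ∉ Set.range root → ⁅e i, e j⁆ = 0)
    (hnil : ∀ x : n, IsNilpotent (LieAlgebra.ad ℂ n x))
    (ξ : Fin 6 → ℂ) (hξ₁ : ξ 1 ≠ 0) (hξ₄ : ξ 4 ≠ 0)
    (lam : Module.Dual ℂ n) :
    lam ∈ basicSubvariety e {1, 4} ξ ↔
      (lam (e 4) = ξ 4 ∧ lam (e 5) = 0 ∧
        6 * c₃ ^ 2 * lam (e 1) * lam (e 4) ^ 2 - c₁ * c₂ * lam (e 3) ^ 3 =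
          6 * c₃ ^ 2 * ξ 1 * ξ 4 ^ 2 ∧
        2 * c₃ * lam (e 2) * lam (e 4) - c₂ * lam (e 3) ^ 2 = 0) :=
  stmt6_general α β hαα hββ hαβ root hroot c₁ c₂ c₃ c₄ c₅ hc₃ e h01 h02 h03 h41 h23 h0 hnil ξ hξ₄
    lam
end

section
/- Let D⊆G₂⁺ be a non-singular rook placement and let ξ₁, ξ₂ : D→ℂ∖{0} be distinct maps. Then the associated coadjoint orbits do not coincide: Ω_{D,ξ₁} ≠ Ω_{D,ξ₂}. -/
open scoped RealInnerProductSpace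

/-!
If the two orbits coincide, then `f_{D,ξ₁} = f_{D,ξ₂} ∘ exp (-ad x)` for some `x`. Since `ad x`
strictly raises the height of root vectors, `exp (-ad x) e_γ - e_γ` lies in the span of root
vectors of height `> ht γ`, on which `f_{D,ξ₂}` vanishes as soon as no root of `D` is higher than
`γ`; then `ξ₁ γ = ξ₂ γ`. For a non-singular rook placement the only exceptions are `γ = α` with
`3α+2β ∈ D`, and `γ ∈ {β, α+β}` with `2α+β` or `3α+β ∈ D`. There one first evaluates the
identity at suitable roots `δ ∉ D`, where it reduces to its linear term `0 = f_{D,ξ₂} [e_δ, x]`;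
this kills the coordinates of `x` that could move `e_γ` onto a root of `D`.
-/

section expNil

variable {M : Type*} [AddCommGroup M] [Module ℂ M] {B : Module.End ℂ M}

lemma expNil_eq_sum_range {k : ℕ} (hk : B ^ k = 0) :
    expNil B = ∑ i ∈ Finset.range k, (i.factorial : ℂ)⁻¹ • B ^ i := by
  refine Finset.sum_subset (Finset.range_subset_range.2 (Nat.sInf_le hk)) fun i _ hi => ?_
  rw [pow_eq_zero_of_le (not_lt.1 (mt Finset.mem_range.2 hi)) (pow_nilpotencyClass ⟨k, hk⟩),
    smul_zero]

lemma expNil_zero : expNil (0 : Module.End ℂ M) = 1 := by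
  rw [expNil_eq_sum_range (k := 1) (pow_one _)]
  simp

lemma expNil_apply_sub_sub_mem (hB : IsNilpotent B) {W : Submodule ℂ M}
    (hW : ∀ w ∈ W, B w ∈ W) {v : M} (hv : B (B v) ∈ W) : expNil B v - v - B v ∈ W := by
  obtain ⟨k, hk⟩ := hB
  have hpow : ∀ i, (B ^ i) (B (B v)) ∈ W := fun i => by
    induction i with
    | zero => exact hv
    | succ i ih => rw [pow_succ', Module.End.mul_apply]; exact hW _ ih
  rw [expNil_eq_sum_range (k := k + 2) (by rw [pow_add, hk, zero_mul]),
    Finset.sum_range_succ', Finset.sum_range_succ']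
  simp only [zero_add, Nat.factorial_zero, Nat.factorial_one, Nat.cast_one, inv_one, one_smul,
    pow_zero, pow_one, LinearMap.add_apply, Module.End.one_apply, LinearMap.sum_apply,
    LinearMap.smul_apply, add_sub_cancel_right]
  refine Submodule.sum_mem _ fun i _ => W.smul_mem _ ?_
  rw [pow_succ, pow_succ, Module.End.mul_apply, Module.End.mul_apply]
  exact hpow i

lemma apply_expNil_eq_add_apply (hB : IsNilpotent B) {W : Submodule ℂ M}
    (hW : ∀ w ∈ W, B w ∈ W) {F : Module.Dual ℂ M} (hWF : W ≤ LinearMap.ker F) {v : M}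
    (hv : B (B v) ∈ W) : F (expNil B v) = F v + F (B v) := by
  have := hWF (expNil_apply_sub_sub_mem hB hW hv)
  rwa [LinearMap.mem_ker, map_sub, map_sub, sub_sub, sub_eq_zero] at this

lemma apply_expNil_eq_apply (hB : IsNilpotent B) {W : Submodule ℂ M}
    (hW : ∀ w ∈ W, B w ∈ W) {F : Module.Dual ℂ M} (hWF : W ≤ LinearMap.ker F) {v : M}
    (hv : B v ∈ W) : F (expNil B v) = F v := by
  rw [apply_expNil_eq_add_apply hB hW hWF (hW _ hv), hWF hv, add_zero]

end expNil

noncomputable def coordForm {R M ι : Type*} [CommRing R] [AddCommGroup M] [Module R M]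
    (e : Module.Basis ι R M) (D : Finset ι) (ξ : ι → R) : Module.Dual R M :=
  ∑ i ∈ D, ξ i • e.coord i

@[simp]
lemma coordForm_apply_basis {R M ι : Type*} [CommRing R] [AddCommGroup M] [Module R M]
    [DecidableEq ι] (e : Module.Basis ι R M) (D : Finset ι) (ξ : ι → R) (j : ι) :
    coordForm e D ξ (e j) = if j ∈ D then ξ j else 0 := by
  simp [coordForm, Finsupp.single_apply]

section LieAlgebra

variable {n : Type*} [LieRing n] [LieAlgebra ℂ n]

lemma coordForm_mem_coadjointOrbit {ι : Type*} (e : Module.Basis ι ℂ n) (D : Finset ι)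
    (ξ : ι → ℂ) : coordForm e D ξ ∈ coadjointOrbit e D ξ :=
  ⟨0, by rw [map_zero, neg_zero, expNil_zero, Module.End.one_eq_id, LinearMap.comp_id]; rfl⟩

lemma LieAlgebra.neg_ad_apply (x v : n) : (-LieAlgebra.ad ℂ n x) v = ⁅v, x⁆ := by
  rw [LinearMap.neg_apply, LieAlgebra.ad_apply, lie_skew]

lemma Module.Basis.lie_eq_sum {ι : Type*} [Fintype ι] (e : Module.Basis ι ℂ n) (y x : n) :
    ⁅y, x⁆ = ∑ k, e.repr x k • ⁅y, e k⁆ := by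
  conv_lhs => rw [← e.sum_repr x]
  simp only [lie_sum, lie_smul]

end LieAlgebra

namespace G2

def coeff : Fin 6 → ℤ × ℤ := ![(1, 0), (0, 1), (1, 1), (2, 1), (3, 1), (3, 2)]

/-- Twice the inner product of `p.1 • α + p.2 • β` and `q.1 • α + q.2 • β`. -/
def twiceInner (p q : ℤ × ℤ) : ℤ := 2 * p.1 * q.1 - 3 * (p.1 * q.2 + p.2 * q.1) + 6 * p.2 * q.2

def height (i : Fin 6) : ℕ := ((coeff i).1 + (coeff i).2).toNat

def RookCompatible (i j : Fin 6) : Prop :=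
  twiceInner (coeff i) (coeff j) ≤ 0 ∧ ∀ k, coeff i - coeff j ≠ coeff k

instance : DecidableRel RookCompatible := fun _ _ => by unfold RookCompatible; infer_instance

def IsNonsingularRook (D : Finset (Fin 6)) : Prop :=
  ∀ i ∈ D, ∀ j ∈ D, i ≠ j → RookCompatible i j

lemma IsNonsingularRook.notMem {D : Finset (Fin 6)} (hD : IsNonsingularRook D) {i : Fin 6}
    (hi : i ∈ D) {j : Fin 6} (hij : i ≠ j := by decide)
    (hij' : ¬(RookCompatible i j ∧ RookCompatible j i) := by decide) : j ∉ D :=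
  fun hj => hij' ⟨hD i hi j hj hij, hD j hj i hi hij.symm⟩

section Roots

variable {E : Type*} [NormedAddCommGroup E] [InnerProductSpace ℝ E]

def combination (α β : E) : ℤ × ℤ →+ E where
  toFun p := (p.1 : ℝ) • α + (p.2 : ℝ) • β
  map_zero' := by simp
  map_add' p q := by simp only [Prod.fst_add, Prod.snd_add, Int.cast_add, add_smul]; abel

variable {α β : E}

lemma combination_comp_coeff : combination α β ∘ coeff =
    ![α, β, α + β, (2:ℝ) • α + β, (3:ℝ) • α + β, (3:ℝ) • α + (2:ℝ) • β] := by
  ext1 i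
  fin_cases i <;> simp [combination, coeff]

variable (hαα : ⟪α, α⟫ = 1) (hββ : ⟪β, β⟫ = 3) (hαβ : ⟪α, β⟫ = -(3 / 2))
include hαα hββ hαβ

lemma two_mul_inner_combination (p q : ℤ × ℤ) :
    2 * ⟪combination α β p, combination α β q⟫ = twiceInner p q := by
  simp only [combination, AddMonoidHom.coe_mk, ZeroHom.coe_mk, twiceInner, inner_add_left,
    inner_add_right, real_inner_smul_left, real_inner_smul_right, hαα, hββ, hαβ,
    real_inner_comm α β]
  push_cast
  ring

lemma combination_injective : Function.Injective (combination α β) := by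
  refine (injective_iff_map_eq_zero _).2 fun p hp => ?_
  have h₁ := two_mul_inner_combination hαα hββ hαβ p (1, 0)
  have h₂ := two_mul_inner_combination hαα hββ hαβ p (0, 1)
  simp only [hp, inner_zero_left, mul_zero, twiceInner] at h₁ h₂
  norm_cast at h₁ h₂
  ext <;> simp <;> omega

local notation "root" => combination α β ∘ coeff

lemma add_notMem_range_root {i j : Fin 6} (h : ∀ k, coeff i + coeff j ≠ coeff k) :
    root i + root j ∉ Set.range root := by
  rintro ⟨k, hk⟩
  exact h k (combination_injective hαα hββ hαβ (by simpa using hk.symm))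

lemma isNonsingularRook_of_root {D : Finset (Fin 6)}
    (hrook : ∀ i ∈ D, ∀ j ∈ D, root i ≠ root j → ⟪root i, root j⟫ ≤ 0)
    (hns : ∀ i ∈ D, ∀ j ∈ D, root i ≠ root j → root i - root j ∉ Set.range root) :
    IsNonsingularRook D := by
  intro i hi j hj hij
  have hroot : root i ≠ root j :=
    ((combination_injective hαα hββ hαβ).comp (by decide : Function.Injective coeff)).ne hij
  refine ⟨?_, fun k hk => hns i hi j hj hroot ⟨k, by simp [← hk]⟩⟩
  have hinner := two_mul_inner_combination hαα hββ hαβ (coeff i) (coeff j)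
  have hle : ⟪root i, root j⟫ ≤ 0 := hrook i hi j hj hroot
  rw [Function.comp_apply, Function.comp_apply] at hle
  exact_mod_cast (by linarith : (twiceInner (coeff i) (coeff j) : ℝ) ≤ 0)

end Roots

variable {n : Type*} [LieRing n] [LieAlgebra ℂ n]

structure IsRootVectorBasis (e : Module.Basis (Fin 6) ℂ n) (c₁ c₂ c₃ c₄ c₅ : ℂ) : Prop where
  lie_zero_one : ⁅e 0, e 1⁆ = c₁ • e 2
  lie_zero_two : ⁅e 0, e 2⁆ = c₂ • e 3
  lie_zero_three : ⁅e 0, e 3⁆ = c₃ • e 4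
  lie_four_one : ⁅e 4, e 1⁆ = c₄ • e 5
  lie_two_three : ⁅e 2, e 3⁆ = c₅ • e 5
  lie_eq_zero : ∀ i j, (∀ k, coeff i + coeff j ≠ coeff k) → ⁅e i, e j⁆ = 0

variable {e : Module.Basis (Fin 6) ℂ n}

def upperSpan (e : Module.Basis (Fin 6) ℂ n) (m : ℕ) : Submodule ℂ n :=
  Submodule.span ℂ (e '' {k | m < height k})

lemma basis_mem_upperSpan {m : ℕ} {k : Fin 6} (hk : m < height k) : e k ∈ upperSpan e m :=
  Submodule.subset_span ⟨k, hk, rfl⟩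

lemma upperSpan_anti {m m' : ℕ} (h : m ≤ m') : upperSpan e m' ≤ upperSpan e m :=
  Submodule.span_mono (Set.image_mono fun _ hk => lt_of_le_of_lt h hk)

lemma upperSpan_le_ker {D : Finset (Fin 6)} {ξ : Fin 6 → ℂ} {m : ℕ}
    (hD : ∀ k ∈ D, height k ≤ m) : upperSpan e m ≤ LinearMap.ker (coordForm e D ξ) := by
  refine Submodule.span_le.2 ?_
  rintro _ ⟨k, hk, rfl⟩
  have : k ∉ D := fun hkD => (hD k hkD).not_gt hk
  simp [this]

namespace IsRootVectorBasis

section Brackets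

variable {c₁ c₂ c₃ c₄ c₅ : ℂ} (h : IsRootVectorBasis e c₁ c₂ c₃ c₄ c₅) (x : n)
include h

lemma lie_basis_zero :
    ⁅e 0, x⁆ = (e.repr x 1 * c₁) • e 2 + (e.repr x 2 * c₂) • e 3 + (e.repr x 3 * c₃) • e 4 := by
  rw [e.lie_eq_sum, Fin.sum_univ_six, h.lie_zero_one, h.lie_zero_two, h.lie_zero_three,
    h.lie_eq_zero 0 4 (by decide), h.lie_eq_zero 0 5 (by decide), lie_self]
  module

lemma lie_basis_one : ⁅e 1, x⁆ = -(e.repr x 0 * c₁) • e 2 - (e.repr x 4 * c₄) • e 5 := by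
  rw [e.lie_eq_sum, Fin.sum_univ_six, ← lie_skew (e 1) (e 0), ← lie_skew (e 1) (e 4),
    h.lie_zero_one, h.lie_four_one, h.lie_eq_zero 1 2 (by decide), h.lie_eq_zero 1 3 (by decide),
    h.lie_eq_zero 1 5 (by decide), lie_self]
  module

lemma lie_basis_two : ⁅e 2, x⁆ = -(e.repr x 0 * c₂) • e 3 + (e.repr x 3 * c₅) • e 5 := by
  rw [e.lie_eq_sum, Fin.sum_univ_six, ← lie_skew (e 2) (e 0), h.lie_zero_two, h.lie_two_three,
    h.lie_eq_zero 2 1 (by decide), h.lie_eq_zero 2 4 (by decide), h.lie_eq_zero 2 5 (by decide),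
    lie_self]
  module

lemma lie_basis_three : ⁅e 3, x⁆ = -(e.repr x 0 * c₃) • e 4 - (e.repr x 2 * c₅) • e 5 := by
  rw [e.lie_eq_sum, Fin.sum_univ_six, ← lie_skew (e 3) (e 0), ← lie_skew (e 3) (e 2),
    h.lie_zero_three, h.lie_two_three, h.lie_eq_zero 3 1 (by decide),
    h.lie_eq_zero 3 4 (by decide), h.lie_eq_zero 3 5 (by decide), lie_self]
  module

lemma lie_basis_four : ⁅e 4, x⁆ = (e.repr x 1 * c₄) • e 5 := by
  rw [e.lie_eq_sum, Fin.sum_univ_six, h.lie_four_one, h.lie_eq_zero 4 0 (by decide),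
    h.lie_eq_zero 4 2 (by decide), h.lie_eq_zero 4 3 (by decide), h.lie_eq_zero 4 5 (by decide),
    lie_self]
  module

lemma lie_basis_five : ⁅e 5, x⁆ = 0 := by
  rw [e.lie_eq_sum, Fin.sum_univ_six, h.lie_eq_zero 5 0 (by decide), h.lie_eq_zero 5 1 (by decide),
    h.lie_eq_zero 5 2 (by decide), h.lie_eq_zero 5 3 (by decide), h.lie_eq_zero 5 4 (by decide),
    lie_self]
  simp

lemma lie_basis_mem_upperSpan (k : Fin 6) : ⁅e k, x⁆ ∈ upperSpan e (height k) := by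
  match k with
  | 0 =>
    rw [h.lie_basis_zero]
    refine add_mem (add_mem ?_ ?_) ?_ <;>
      exact Submodule.smul_mem _ _ (basis_mem_upperSpan (by decide))
  | 1 =>
    rw [h.lie_basis_one]
    refine sub_mem ?_ ?_ <;> exact Submodule.smul_mem _ _ (basis_mem_upperSpan (by decide))
  | 2 =>
    rw [h.lie_basis_two]
    refine add_mem ?_ ?_ <;> exact Submodule.smul_mem _ _ (basis_mem_upperSpan (by decide))
  | 3 =>
    rw [h.lie_basis_three]
    refine sub_mem ?_ ?_ <;> exact Submodule.smul_mem _ _ (basis_mem_upperSpan (by decide))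
  | 4 => rw [h.lie_basis_four]; exact Submodule.smul_mem _ _ (basis_mem_upperSpan (by decide))
  | 5 => rw [h.lie_basis_five]; exact zero_mem _

lemma lie_mem_upperSpan_succ {m : ℕ} {w : n} (hw : w ∈ upperSpan e m) :
    ⁅w, x⁆ ∈ upperSpan e (m + 1) := by
  induction hw using Submodule.span_induction with
  | mem _ hv =>
    obtain ⟨k, hk, rfl⟩ := hv
    exact upperSpan_anti hk (h.lie_basis_mem_upperSpan x k)
  | zero => simp
  | add _ _ _ _ hv hw => rw [add_lie]; exact add_mem hv hw
  | smul a _ _ hv => rw [smul_lie]; exact Submodule.smul_mem _ a hv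

lemma lie_mem_upperSpan {m : ℕ} {w : n} (hw : w ∈ upperSpan e m) : ⁅w, x⁆ ∈ upperSpan e m :=
  upperSpan_anti m.le_succ (h.lie_mem_upperSpan_succ x hw)

end Brackets

section Orbit

variable {c₁ c₂ c₃ c₄ c₅ : ℂ} (h : IsRootVectorBasis e c₁ c₂ c₃ c₄ c₅)
  {x : n} (hx : IsNilpotent (LieAlgebra.ad ℂ n x)) {D : Finset (Fin 6)} {ξ₁ ξ₂ : Fin 6 → ℂ}
  (heq : coordForm e D ξ₁ = (coordForm e D ξ₂).comp (expNil (-LieAlgebra.ad ℂ n x)))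
include h hx heq

lemma coordForm_eq_of_lie_mem {v : n} {m : ℕ} (hv : ⁅v, x⁆ ∈ upperSpan e m)
    (hD : ∀ k ∈ D, height k ≤ m) : coordForm e D ξ₁ v = coordForm e D ξ₂ v := by
  rw [heq, LinearMap.comp_apply]
  refine apply_expNil_eq_apply hx.neg (fun w hw => ?_) (upperSpan_le_ker hD) ?_
  · rw [LieAlgebra.neg_ad_apply]; exact h.lie_mem_upperSpan x hw
  · rwa [LieAlgebra.neg_ad_apply]

lemma coordForm_eq_add_of_lie_lie_mem {v : n} {m : ℕ} (hv : ⁅⁅v, x⁆, x⁆ ∈ upperSpan e m)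
    (hD : ∀ k ∈ D, height k ≤ m) :
    coordForm e D ξ₁ v = coordForm e D ξ₂ v + coordForm e D ξ₂ ⁅v, x⁆ := by
  rw [heq, LinearMap.comp_apply, ← LieAlgebra.neg_ad_apply x v]
  refine apply_expNil_eq_add_apply hx.neg (fun w hw => ?_) (upperSpan_le_ker hD) ?_
  · rw [LieAlgebra.neg_ad_apply]; exact h.lie_mem_upperSpan x hw
  · rwa [LieAlgebra.neg_ad_apply, LieAlgebra.neg_ad_apply]

lemma coordForm_basis_eq_of_height_le {i : Fin 6} (hD : ∀ k ∈ D, height k ≤ height i) :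
    coordForm e D ξ₁ (e i) = coordForm e D ξ₂ (e i) :=
  h.coordForm_eq_of_lie_mem hx heq (h.lie_basis_mem_upperSpan x i) hD

lemma repr_zero_eq_zero_of_three_mem (hc₂ : c₂ ≠ 0) (h3 : 3 ∈ D) (h2 : 2 ∉ D) (h4 : 4 ∉ D)
    (h5 : 5 ∉ D) (hξ : ξ₂ 3 ≠ 0) : e.repr x 0 = 0 := by
  have key := h.coordForm_eq_add_of_lie_lie_mem hx heq
    (h.lie_mem_upperSpan_succ x (h.lie_basis_mem_upperSpan x 2))
    (fun k hk => by fin_cases k <;> simp_all [height, coeff])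
  rw [h.lie_basis_two] at key
  simpa [h2, h3, h5, hc₂, hξ] using key

lemma repr_zero_eq_zero_of_four_mem (hc₃ : c₃ ≠ 0) (h4 : 4 ∈ D) (h3 : 3 ∉ D) (h5 : 5 ∉ D)
    (hξ : ξ₂ 4 ≠ 0) : e.repr x 0 = 0 := by
  have key := h.coordForm_eq_add_of_lie_lie_mem hx heq
    (h.lie_mem_upperSpan_succ x (h.lie_basis_mem_upperSpan x 3))
    (fun k hk => by fin_cases k <;> simp_all [height, coeff])
  rw [h.lie_basis_three] at key
  simpa [h3, h4, h5, hc₃, hξ] using key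

lemma coordForm_basis_zero_eq_of_five_mem (hc₄ : c₄ ≠ 0) (hc₅ : c₅ ≠ 0) (h5 : 5 ∈ D)
    (h3 : 3 ∉ D) (h4 : 4 ∉ D) (hξ : ξ₂ 5 ≠ 0) :
    coordForm e D ξ₁ (e 0) = coordForm e D ξ₂ (e 0) := by
  have hD : ∀ k ∈ D, height k ≤ 5 := fun k _ => by fin_cases k <;> decide
  have hr₁ : e.repr x 1 = 0 := by
    have key := h.coordForm_eq_add_of_lie_lie_mem hx heq
      (h.lie_mem_upperSpan_succ x (h.lie_basis_mem_upperSpan x 4)) hD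
    rw [h.lie_basis_four] at key
    simpa [h4, h5, hc₄, hξ] using key
  have hr₂ : e.repr x 2 = 0 := by
    have key := h.coordForm_eq_add_of_lie_lie_mem hx heq (v := e 3) (by
      rw [h.lie_basis_three, sub_lie, smul_lie, smul_lie, h.lie_basis_four, h.lie_basis_five, hr₁]
      simp) hD
    rw [h.lie_basis_three] at key
    simpa [h3, h4, h5, hc₅, hξ] using key
  rw [h.coordForm_eq_add_of_lie_lie_mem hx heq (v := e 0) (by
      rw [h.lie_basis_zero, add_lie, add_lie, smul_lie, smul_lie, smul_lie, h.lie_basis_four, hr₁,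
        hr₂]
      simp) hD, h.lie_basis_zero, hr₁, hr₂]
  simp [h4]

theorem eq_of_coordForm_eq_comp_expNil (hc₂ : c₂ ≠ 0) (hc₃ : c₃ ≠ 0) (hc₄ : c₄ ≠ 0)
    (hc₅ : c₅ ≠ 0) (hD : IsNonsingularRook D) (hξ₂ : ∀ i ∈ D, ξ₂ i ≠ 0) {i : Fin 6}
    (hi : i ∈ D) : ξ₁ i = ξ₂ i := by
  suffices coordForm e D ξ₁ (e i) = coordForm e D ξ₂ (e i) by simpa [hi] using this
  have h_le := h.coordForm_basis_eq_of_height_le hx heq (i := i)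
  match i with
  | 0 =>
    have h3 := hD.notMem hi (j := 3)
    have h4 := hD.notMem hi (j := 4)
    by_cases h5 : 5 ∈ D
    · exact h.coordForm_basis_zero_eq_of_five_mem hx heq hc₄ hc₅ h5 h3 h4 (hξ₂ 5 h5)
    · have h2 := hD.notMem hi (j := 2)
      exact h_le fun k hk => by fin_cases k <;> simp_all [height, coeff]
  | 1 =>
    have h2 := hD.notMem hi (j := 2)
    have h5 := hD.notMem hi (j := 5)
    by_cases h34 : 3 ∈ D ∨ 4 ∈ D
    · have hr₀ : e.repr x 0 = 0 := h34.elim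
        (fun h3 => h.repr_zero_eq_zero_of_three_mem hx heq hc₂ h3 h2 (hD.notMem h3) h5 (hξ₂ 3 h3))
        (fun h4 => h.repr_zero_eq_zero_of_four_mem hx heq hc₃ h4 (hD.notMem h4) h5 (hξ₂ 4 h4))
      refine h.coordForm_eq_of_lie_mem hx heq (m := 4) ?_
        (fun k hk => by fin_cases k <;> simp_all [height, coeff])
      rw [h.lie_basis_one, hr₀]
      simpa using Submodule.smul_mem _ _ (basis_mem_upperSpan (by decide))
    · exact h_le fun k hk => by fin_cases k <;> simp_all [height, coeff]
  | 2 =>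
    have h3 := hD.notMem hi (j := 3)
    have h5 := hD.notMem hi (j := 5)
    by_cases h4 : 4 ∈ D
    · have hr₀ := h.repr_zero_eq_zero_of_four_mem hx heq hc₃ h4 h3 h5 (hξ₂ 4 h4)
      refine h.coordForm_eq_of_lie_mem hx heq (m := 4) ?_
        (fun k hk => by fin_cases k <;> simp_all [height, coeff])
      rw [h.lie_basis_two, hr₀]
      simpa using Submodule.smul_mem _ _ (basis_mem_upperSpan (by decide))
    · exact h_le fun k hk => by fin_cases k <;> simp_all [height, coeff]
  | 3 =>
    have h4 := hD.notMem hi (j := 4)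
    have h5 := hD.notMem hi (j := 5)
    exact h_le fun k hk => by fin_cases k <;> simp_all [height, coeff]
  | 4 =>
    have h5 := hD.notMem hi (j := 5)
    exact h_le fun k hk => by fin_cases k <;> simp_all [height, coeff]
  | 5 => exact h_le fun k _ => by fin_cases k <;> decide

end Orbit

end IsRootVectorBasis

end G2

theorem stmt11_general {n : Type*} [LieRing n] [LieAlgebra ℂ n]
    (α β : EuclideanSpace ℝ (Fin 2))
    (hαα : ⟪α, α⟫ = 1) (hββ : ⟪β, β⟫ = 3) (hαβ : ⟪α, β⟫ = -(3/2))
    -- the six positive roots of `G₂`: `α, β, α+β, 2α+β, 3α+β, 3α+2β`, indexed by `Fin 6`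
    (root : Fin 6 → EuclideanSpace ℝ (Fin 2))
    (hroot : root = ![α, β, α + β, (2:ℝ) • α + β, (3:ℝ) • α + β, (3:ℝ) • α + (2:ℝ) • β])
    (c₁ c₂ c₃ c₄ c₅ : ℂ)
    (hc₂ : c₂ ≠ 0) (hc₃ : c₃ ≠ 0) (hc₄ : c₄ ≠ 0) (hc₅ : c₅ ≠ 0)
    (e : Module.Basis (Fin 6) ℂ n)
    (h01 : ⁅e 0, e 1⁆ = c₁ • e 2)
    (h02 : ⁅e 0, e 2⁆ = c₂ • e 3)
    (h03 : ⁅e 0, e 3⁆ = c₃ • e 4)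
    (h41 : ⁅e 4, e 1⁆ = c₄ • e 5)
    (h23 : ⁅e 2, e 3⁆ = c₅ • e 5)
    (h0 : ∀ i j : Fin 6, root i + root j ∉ Set.range root → ⁅e i, e j⁆ = 0)
    (hnil : ∀ x : n, IsNilpotent (LieAlgebra.ad ℂ n x))
    (D : Finset (Fin 6))
    -- `D` is a rook placement: pairwise non-positive inner products
    (hrook : ∀ i ∈ D, ∀ j ∈ D, root i ≠ root j → ⟪root i, root j⟫ ≤ 0)
    -- `D` is non-singular: no difference of two distinct roots of `D` is a positive root
    (hns : ∀ i ∈ D, ∀ j ∈ D, root i ≠ root j → root i - root j ∉ Set.range root)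
    (ξ₁ ξ₂ : Fin 6 → ℂ) (hξ₂ : ∀ i ∈ D, ξ₂ i ≠ 0)
    -- the maps `ξ₁, ξ₂ : D → ℂˣ` are distinct
    (hne : ∃ i ∈ D, ξ₁ i ≠ ξ₂ i) :
    coadjointOrbit e D ξ₁ ≠ coadjointOrbit e D ξ₂ := by
  intro horb
  rw [← G2.combination_comp_coeff] at hroot
  subst hroot
  have hL : G2.IsRootVectorBasis e c₁ c₂ c₃ c₄ c₅ :=
    ⟨h01, h02, h03, h41, h23, fun i j hij => h0 i j (G2.add_notMem_range_root hαα hββ hαβ hij)⟩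
  obtain ⟨x, hx⟩ : coordForm e D ξ₁ ∈ coadjointOrbit e D ξ₂ :=
    horb ▸ coordForm_mem_coadjointOrbit e D ξ₁
  obtain ⟨i, hi, hne⟩ := hne
  exact hne (hL.eq_of_coordForm_eq_comp_expNil (hnil x) hx hc₂ hc₃ hc₄ hc₅
    (G2.isNonsingularRook_of_root hαα hββ hαβ hrook hns) hξ₂ hi)

theorem stmt11 {n : Type*} [LieRing n] [LieAlgebra ℂ n]
    (α β : EuclideanSpace ℝ (Fin 2))
    (hαα : ⟪α, α⟫ = 1) (hββ : ⟪β, β⟫ = 3) (hαβ : ⟪α, β⟫ = -(3/2))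
    -- the six positive roots of `G₂`: `α, β, α+β, 2α+β, 3α+β, 3α+2β`, indexed by `Fin 6`
    (root : Fin 6 → EuclideanSpace ℝ (Fin 2))
    (hroot : root = ![α, β, α + β, (2:ℝ) • α + β, (3:ℝ) • α + β, (3:ℝ) • α + (2:ℝ) • β])
    (c₁ c₂ c₃ c₄ c₅ : ℂ)
    (hc₁ : c₁ ≠ 0) (hc₂ : c₂ ≠ 0) (hc₃ : c₃ ≠ 0) (hc₄ : c₄ ≠ 0) (hc₅ : c₅ ≠ 0)
    (e : Module.Basis (Fin 6) ℂ n)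
    (h01 : ⁅e 0, e 1⁆ = c₁ • e 2)
    (h02 : ⁅e 0, e 2⁆ = c₂ • e 3)
    (h03 : ⁅e 0, e 3⁆ = c₃ • e 4)
    (h41 : ⁅e 4, e 1⁆ = c₄ • e 5)
    (h23 : ⁅e 2, e 3⁆ = c₅ • e 5)
    (h0 : ∀ i j : Fin 6, root i + root j ∉ Set.range root → ⁅e i, e j⁆ = 0)
    (hnil : ∀ x : n, IsNilpotent (LieAlgebra.ad ℂ n x))
    (D : Finset (Fin 6))
    -- `D` is a rook placement: pairwise non-positive inner products
    (hrook : ∀ i ∈ D, ∀ j ∈ D, root i ≠ root j → ⟪root i, root j⟫ ≤ 0)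
    -- `D` is non-singular: no difference of two distinct roots of `D` is a positive root
    (hns : ∀ i ∈ D, ∀ j ∈ D, root i ≠ root j → root i - root j ∉ Set.range root)
    (ξ₁ ξ₂ : Fin 6 → ℂ) (hξ₁ : ∀ i ∈ D, ξ₁ i ≠ 0) (hξ₂ : ∀ i ∈ D, ξ₂ i ≠ 0)
    -- the maps `ξ₁, ξ₂ : D → ℂˣ` are distinct
    (hne : ∃ i ∈ D, ξ₁ i ≠ ξ₂ i) :
    coadjointOrbit e D ξ₁ ≠ coadjointOrbit e D ξ₂ :=
  stmt11_general α β hαα hββ hαβ root hroot c₁ c₂ c₃ c₄ c₅ hc₂ hc₃ hc₄ hc₅ e h01 h02 h03 h41 h23 h0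
    hnil D hrook hns ξ₁ ξ₂ hξ₂ hne
end
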